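/- Let a ∈ {1, r−1, r}. Then: (i) D(mω_a) > 0 for every integer 0 ≤ m ≤ k; (ii) D(mω_a) = D((k−m)ω_a) for every integer 0 < m < k; (iii) D(kω_a) = 1. -/
import Mathlib


/-- Orthogonal coordinates `u_i(λ)` of `λ + ρ` for the weight
`λ = λ_1 ω_1 + ⋯ + λ_r ω_r` of `D_r` given in fundamental-weight coordinates. -/
noncomputable def uCoord (r : ℕ) (lam : ℕ → ℤ) (i : ℕ) : ℝ :=
  if i = r then ((lam r : ℝ) - (lam (r - 1) : ℝ)) / 2
  else (∑ j ∈ Finset.Icc i (r - 2), (lam j : ℝ))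
      + ((lam (r - 1) : ℝ) + (lam r : ℝ)) / 2 + ((r : ℝ) - (i : ℝ))

/-- The level-`k` quantum dimension of the weight `λ` of `D_r`
(`h = 2r - 2` is the Coxeter number), given by the product over the
positive roots `e_i - e_j`, `e_i + e_j` (`1 ≤ i < j ≤ r`). -/
noncomputable def qdimD (r k : ℕ) (lam : ℕ → ℤ) : ℝ :=
  ∏ p ∈ (Finset.Icc 1 r ×ˢ Finset.Icc 1 r).filter (fun p => p.1 < p.2),
    (Real.sin (Real.pi * (uCoord r lam p.1 - uCoord r lam p.2) / (2 * (r : ℝ) - 2 + (k : ℝ)))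
      * Real.sin (Real.pi * (uCoord r lam p.1 + uCoord r lam p.2) / (2 * (r : ℝ) - 2 + (k : ℝ))))
    / (Real.sin (Real.pi * ((p.2 : ℝ) - (p.1 : ℝ)) / (2 * (r : ℝ) - 2 + (k : ℝ)))
      * Real.sin (Real.pi * (2 * (r : ℝ) - (p.1 : ℝ) - (p.2 : ℝ)) / (2 * (r : ℝ) - 2 + (k : ℝ))))

lemma uCoord_one (r : ℕ) (hr : 4 ≤ r) (m : ℤ) {i : ℕ} (hi1 : 1 ≤ i) (hir : i ≤ r) :
    uCoord r (fun j => if j = 1 then m else 0) i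
      = (if i = 1 then (m : ℝ) else 0) + ((r : ℝ) - (i : ℝ)) := by
  unfold uCoord
  beta_reduce
  have h1 : ¬ (r = 1) := by omega
  have h2 : ¬ (r - 1 = 1) := by omega
  by_cases hi : i = r
  · rw [if_pos hi, if_neg h1, if_neg h2, if_neg (by omega : ¬ i = 1), hi]
    simp
  · rw [if_neg hi, if_neg (by omega : ¬ r - 1 = 1), if_neg h1]
    have : (∑ j ∈ Finset.Icc i (r - 2), ((if j = 1 then m else 0 : ℤ) : ℝ))
        = if i = 1 then (m : ℝ) else 0 := by
      have : ∀ j, ((if j = 1 then m else 0 : ℤ) : ℝ) = if j = 1 then (m : ℝ) else 0 := by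
        intro j; split <;> simp
      simp_rw [this]
      rw [Finset.sum_ite_eq' (Finset.Icc i (r-2)) 1 (fun _ => (m:ℝ))]
      by_cases hi1' : i = 1
      · subst hi1'; rw [if_pos (by simp [Finset.mem_Icc]; omega)]; simp
      · rw [if_neg (by simp [Finset.mem_Icc]; omega)]; simp [hi1']
    rw [this]
    push_cast
    ring

lemma uCoord_r (r : ℕ) (hr : 4 ≤ r) (m : ℤ) {i : ℕ} (hi1 : 1 ≤ i) (hir : i ≤ r) :
    uCoord r (fun j => if j = r then m else 0) i
      = ((r : ℝ) - (i : ℝ)) + (m : ℝ) / 2 := by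
  unfold uCoord
  beta_reduce
  have h2 : ¬ (r - 1 = r) := by omega
  by_cases hi : i = r
  · subst hi
    rw [if_pos rfl, if_pos rfl, if_neg h2]
    push_cast; ring
  · rw [if_neg hi, if_neg h2, if_pos rfl]
    have : (∑ j ∈ Finset.Icc i (r - 2), ((if j = r then m else 0 : ℤ) : ℝ)) = 0 := by
      apply Finset.sum_eq_zero
      intro j hj
      simp only [Finset.mem_Icc] at hj
      rw [if_neg (by omega)]
      simp
    rw [this]
    push_cast
    ring

lemma uCoord_rm1 (r : ℕ) (hr : 4 ≤ r) (m : ℤ) {i : ℕ} (hi1 : 1 ≤ i) (hir : i ≤ r) :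
    uCoord r (fun j => if j = r - 1 then m else 0) i
      = if i = r then -(m : ℝ) / 2 else ((r : ℝ) - (i : ℝ)) + (m : ℝ) / 2 := by
  unfold uCoord
  beta_reduce
  have h2 : ¬ (r = r - 1) := by omega
  by_cases hi : i = r
  · subst hi
    rw [if_pos rfl, if_pos rfl, if_pos rfl, if_neg h2]
    push_cast; ring
  · rw [if_neg hi, if_neg hi, if_pos rfl, if_neg h2]
    have : (∑ j ∈ Finset.Icc i (r - 2), ((if j = r - 1 then m else 0 : ℤ) : ℝ)) = 0 := by
      apply Finset.sum_eq_zero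
      intro j hj
      simp only [Finset.mem_Icc] at hj
      rw [if_neg (by omega)]
      simp
    rw [this]
    push_cast
    ring

noncomputable def numF (r k : ℕ) (m : ℝ) (p : ℕ × ℕ) : ℝ :=
  Real.sin (Real.pi * ((p.2 : ℝ) - (p.1 : ℝ)) / (2 * (r : ℝ) - 2 + (k : ℝ)))
    * Real.sin (Real.pi * (2 * (r : ℝ) - (p.1 : ℝ) - (p.2 : ℝ) + m) / (2 * (r : ℝ) - 2 + (k : ℝ)))

def pairsD (r : ℕ) : Finset (ℕ × ℕ) :=
  (Finset.Icc 1 r ×ˢ Finset.Icc 1 r).filter (fun p => p.1 < p.2)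

lemma mem_pairsD {r : ℕ} {p : ℕ × ℕ} :
    p ∈ pairsD r ↔ 1 ≤ p.1 ∧ p.1 < p.2 ∧ p.2 ≤ r := by
  unfold pairsD
  simp only [Finset.mem_filter, Finset.mem_product, Finset.mem_Icc]
  constructor
  · rintro ⟨⟨⟨h1, h2⟩, ⟨h3, h4⟩⟩, h5⟩; exact ⟨h1, h5, h4⟩
  · rintro ⟨h1, h2, h3⟩; exact ⟨⟨⟨h1, by omega⟩, ⟨by omega, h3⟩⟩, h2⟩

lemma sin_pos_aux {N x : ℝ} (hN : 0 < N) (hx : 0 < x) (hxN : x < N) :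
    0 < Real.sin (Real.pi * x / N) := by
  apply Real.sin_pos_of_pos_of_lt_pi
  · positivity
  · rw [div_lt_iff₀ hN]
    nlinarith [Real.pi_pos]

lemma sin_flip {N : ℝ} (hN : N ≠ 0) (x : ℝ) :
    Real.sin (Real.pi * (N - x) / N) = Real.sin (Real.pi * x / N) := by
  have h : Real.pi * (N - x) / N = Real.pi - Real.pi * x / N := by
    field_simp
  rw [h, Real.sin_pi_sub]

lemma numF_pos {r k : ℕ} (hr : 4 ≤ r) {p : ℕ × ℕ} (hp : p ∈ pairsD r)
    {m : ℝ} (hm0 : 0 ≤ m) (hmk : m ≤ (k : ℝ)) : 0 < numF r k m p := by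
  obtain ⟨h1, h2, h3⟩ := mem_pairsD.mp hp
  have c1 : (1 : ℝ) ≤ (p.1 : ℝ) := by exact_mod_cast h1
  have c2 : (p.1 : ℝ) + 1 ≤ (p.2 : ℝ) := by exact_mod_cast h2
  have c3 : (p.2 : ℝ) ≤ (r : ℝ) := by exact_mod_cast h3
  have hrr : (4 : ℝ) ≤ (r : ℝ) := by exact_mod_cast hr
  have hN : 0 < 2 * (r : ℝ) - 2 + (k : ℝ) := by
    have : (0:ℝ) ≤ (k:ℝ) := Nat.cast_nonneg k
    linarith
  unfold numF
  apply mul_pos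
  · exact sin_pos_aux hN (by linarith) (by linarith)
  · exact sin_pos_aux hN (by linarith) (by linarith)

lemma prod_numF_pos {r k : ℕ} (hr : 4 ≤ r) {m : ℝ} (hm0 : 0 ≤ m) (hmk : m ≤ (k : ℝ)) :
    0 < ∏ p ∈ pairsD r, numF r k m p :=
  Finset.prod_pos (fun p hp => numF_pos hr hp hm0 hmk)

lemma prod_numF_symm (r k : ℕ) (hr : 4 ≤ r) (m : ℝ) :
    ∏ p ∈ pairsD r, numF r k m p = ∏ p ∈ pairsD r, numF r k ((k : ℝ) - m) p := by
  have h4 : (4:ℝ) ≤ (r:ℝ) := by exact_mod_cast hr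
  have h0 : (0:ℝ) ≤ (k:ℝ) := Nat.cast_nonneg k
  have hNpos : 0 < 2 * (r : ℝ) - 2 + (k : ℝ) := by linarith
  have hN : (2 * (r : ℝ) - 2 + (k : ℝ)) ≠ 0 := ne_of_gt hNpos
  apply Finset.prod_nbij' (fun p => (r + 1 - p.2, r + 1 - p.1)) (fun p => (r + 1 - p.2, r + 1 - p.1))
  · intro p hp
    obtain ⟨h1, h2, h3⟩ := mem_pairsD.mp hp
    exact mem_pairsD.mpr ⟨by omega, by omega, by omega⟩
  · intro p hp
    obtain ⟨h1, h2, h3⟩ := mem_pairsD.mp hp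
    exact mem_pairsD.mpr ⟨by omega, by omega, by omega⟩
  · rintro ⟨x, y⟩ hp
    obtain ⟨h1, h2, h3⟩ := mem_pairsD.mp hp
    simp only [Prod.mk.injEq]
    simp only at h1 h2 h3
    omega
  · rintro ⟨x, y⟩ hp
    obtain ⟨h1, h2, h3⟩ := mem_pairsD.mp hp
    simp only [Prod.mk.injEq]
    simp only at h1 h2 h3
    omega
  · intro p hp
    obtain ⟨h1, h2, h3⟩ := mem_pairsD.mp hp
    unfold numF
    simp only
    have c1 : ((r + 1 - p.1 : ℕ) : ℝ) = (r : ℝ) + 1 - (p.1 : ℝ) := by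
      push_cast [Nat.cast_sub (by omega : p.1 ≤ r + 1)]; ring
    have c2 : ((r + 1 - p.2 : ℕ) : ℝ) = (r : ℝ) + 1 - (p.2 : ℝ) := by
      push_cast [Nat.cast_sub (by omega : p.2 ≤ r + 1)]; ring
    rw [c1, c2]
    have e1 : (r : ℝ) + 1 - (p.1 : ℝ) - ((r : ℝ) + 1 - (p.2 : ℝ)) = (p.2 : ℝ) - (p.1 : ℝ) := by ring
    have e2 : 2 * (r : ℝ) - ((r : ℝ) + 1 - (p.2 : ℝ)) - ((r : ℝ) + 1 - (p.1 : ℝ)) + ((k : ℝ) - m)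
        = (2 * (r : ℝ) - 2 + (k : ℝ)) - (2 * (r : ℝ) - (p.1 : ℝ) - (p.2 : ℝ) + m) := by ring
    rw [e1, e2, sin_flip hN]

lemma qdim_r (r k : ℕ) (hr : 4 ≤ r) (m : ℕ) :
    qdimD r k (fun j => if j = r then (m : ℤ) else 0)
      = (∏ p ∈ pairsD r, numF r k (m : ℝ) p) / (∏ p ∈ pairsD r, numF r k 0 p) := by
  unfold qdimD
  rw [← Finset.prod_div_distrib]
  apply Finset.prod_congr rfl
  intro p hp
  obtain ⟨h1, h2, h3⟩ := mem_pairsD.mp (by simpa [pairsD] using hp)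
  rw [uCoord_r r hr (m : ℤ) h1 (by omega), uCoord_r r hr (m : ℤ) (by omega) h3]
  unfold numF
  push_cast
  ring_nf

lemma qdim_rm1 (r k : ℕ) (hr : 4 ≤ r) (m : ℕ) :
    qdimD r k (fun j => if j = r - 1 then (m : ℤ) else 0)
      = qdimD r k (fun j => if j = r then (m : ℤ) else 0) := by
  unfold qdimD
  apply Finset.prod_congr rfl
  intro p hp
  obtain ⟨h1, h2, h3⟩ := mem_pairsD.mp (by simpa [pairsD] using hp)
  rw [uCoord_rm1 r hr (m : ℤ) h1 (by omega), uCoord_rm1 r hr (m : ℤ) (by omega) h3,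
    uCoord_r r hr (m : ℤ) h1 (by omega), uCoord_r r hr (m : ℤ) (by omega) h3]
  rw [if_neg (by omega : ¬ p.1 = r)]
  by_cases hj : p.2 = r
  · rw [if_pos hj, hj]
    push_cast
    ring_nf
  · rw [if_neg hj]

noncomputable def termOne (r k : ℕ) (m : ℝ) (p : ℕ × ℕ) : ℝ :=
  (Real.sin (Real.pi * ((if p.1 = 1 then m else 0) + ((p.2 : ℝ) - (p.1 : ℝ))) / (2 * (r : ℝ) - 2 + (k : ℝ)))
    * Real.sin (Real.pi * ((if p.1 = 1 then m else 0) + (2 * (r : ℝ) - (p.1 : ℝ) - (p.2 : ℝ))) / (2 * (r : ℝ) - 2 + (k : ℝ))))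
  / (Real.sin (Real.pi * ((p.2 : ℝ) - (p.1 : ℝ)) / (2 * (r : ℝ) - 2 + (k : ℝ)))
    * Real.sin (Real.pi * (2 * (r : ℝ) - (p.1 : ℝ) - (p.2 : ℝ)) / (2 * (r : ℝ) - 2 + (k : ℝ))))

lemma qdim_one (r k : ℕ) (hr : 4 ≤ r) (m : ℕ) :
    qdimD r k (fun j => if j = 1 then (m : ℤ) else 0)
      = ∏ p ∈ pairsD r, termOne r k (m : ℝ) p := by
  unfold qdimD
  apply Finset.prod_congr rfl
  intro p hp
  obtain ⟨h1, h2, h3⟩ := mem_pairsD.mp (by simpa [pairsD] using hp)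
  rw [uCoord_one r hr (m : ℤ) h1 (by omega), uCoord_one r hr (m : ℤ) (by omega) h3]
  unfold termOne
  rw [if_neg (by omega : ¬ p.2 = 1)]
  by_cases hi : p.1 = 1
  · rw [if_pos hi, if_pos hi]
    push_cast
    ring_nf
  · rw [if_neg hi, if_neg hi]
    ring_nf

lemma termOne_pos {r k : ℕ} (hr : 4 ≤ r) {p : ℕ × ℕ} (hp : p ∈ pairsD r)
    {m : ℝ} (hm0 : 0 ≤ m) (hmk : m ≤ (k : ℝ)) : 0 < termOne r k m p := by
  obtain ⟨h1, h2, h3⟩ := mem_pairsD.mp hp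
  have c1 : (1 : ℝ) ≤ (p.1 : ℝ) := by exact_mod_cast h1
  have c2 : (p.1 : ℝ) + 1 ≤ (p.2 : ℝ) := by exact_mod_cast h2
  have c3 : (p.2 : ℝ) ≤ (r : ℝ) := by exact_mod_cast h3
  have hrr : (4 : ℝ) ≤ (r : ℝ) := by exact_mod_cast hr
  have hN : 0 < 2 * (r : ℝ) - 2 + (k : ℝ) := by
    have : (0:ℝ) ≤ (k:ℝ) := Nat.cast_nonneg k
    linarith
  have hif0 : (0:ℝ) ≤ (if p.1 = 1 then m else 0) := by split <;> simp [hm0]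
  have hifk : (if p.1 = 1 then m else 0) ≤ (k : ℝ) := by
    split
    · exact hmk
    · exact Nat.cast_nonneg k
  unfold termOne
  apply div_pos
  · apply mul_pos
    · exact sin_pos_aux hN (by linarith) (by linarith)
    · exact sin_pos_aux hN (by linarith) (by linarith)
  · apply mul_pos
    · exact sin_pos_aux hN (by linarith) (by linarith)
    · exact sin_pos_aux hN (by linarith) (by linarith)

lemma termOne_symm {r k : ℕ} (hr : 4 ≤ r) (hk : 1 ≤ k) {p : ℕ × ℕ} (hp : p ∈ pairsD r) (m : ℝ) :
    termOne r k m p = termOne r k ((k : ℝ) - m) p := by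
  obtain ⟨h1, h2, h3⟩ := mem_pairsD.mp hp
  have hrr : (4 : ℝ) ≤ (r : ℝ) := by exact_mod_cast hr
  have hkk : (1:ℝ) ≤ (k:ℝ) := by exact_mod_cast hk
  have hN : (2 * (r : ℝ) - 2 + (k : ℝ)) ≠ 0 := by
    intro h; nlinarith
  unfold termOne
  by_cases hi : p.1 = 1
  · rw [if_pos hi, if_pos hi, hi]
    congr 1
    have e1 : Real.pi * (((k:ℝ) - m) + ((p.2 : ℝ) - (1:ℕ))) / (2 * (r : ℝ) - 2 + (k : ℝ))
        = Real.pi * ((2 * (r : ℝ) - 2 + (k : ℝ)) - (m + (2 * (r : ℝ) - (1:ℕ) - (p.2:ℝ)))) / (2 * (r : ℝ) - 2 + (k : ℝ)) := by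
      push_cast; ring
    have e2 : Real.pi * (((k:ℝ) - m) + (2 * (r : ℝ) - (1:ℕ) - (p.2:ℝ))) / (2 * (r : ℝ) - 2 + (k : ℝ))
        = Real.pi * ((2 * (r : ℝ) - 2 + (k : ℝ)) - (m + ((p.2:ℝ) - (1:ℕ)))) / (2 * (r : ℝ) - 2 + (k : ℝ)) := by
      push_cast; ring
    rw [e1, e2, sin_flip hN, sin_flip hN, mul_comm]
  · rw [if_neg hi, if_neg hi]

lemma termOne_boundary {r k : ℕ} (hr : 4 ≤ r) (hk : 1 ≤ k) {p : ℕ × ℕ} (hp : p ∈ pairsD r) :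
    termOne r k (k : ℝ) p = 1 := by
  obtain ⟨h1, h2, h3⟩ := mem_pairsD.mp hp
  have c1 : (1 : ℝ) ≤ (p.1 : ℝ) := by exact_mod_cast h1
  have c2 : (p.1 : ℝ) + 1 ≤ (p.2 : ℝ) := by exact_mod_cast h2
  have c3 : (p.2 : ℝ) ≤ (r : ℝ) := by exact_mod_cast h3
  have hrr : (4 : ℝ) ≤ (r : ℝ) := by exact_mod_cast hr
  have hN : 0 < 2 * (r : ℝ) - 2 + (k : ℝ) := by
    have : (0:ℝ) ≤ (k:ℝ) := Nat.cast_nonneg k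
    linarith
  have hden : 0 < Real.sin (Real.pi * ((p.2 : ℝ) - (p.1 : ℝ)) / (2 * (r : ℝ) - 2 + (k : ℝ)))
      * Real.sin (Real.pi * (2 * (r : ℝ) - (p.1 : ℝ) - (p.2 : ℝ)) / (2 * (r : ℝ) - 2 + (k : ℝ))) := by
    apply mul_pos
    · exact sin_pos_aux hN (by linarith) (by linarith)
    · exact sin_pos_aux hN (by linarith) (by linarith)
  unfold termOne
  by_cases hi : p.1 = 1
  · rw [if_pos hi, hi]
    have e1 : Real.pi * ((k:ℝ) + ((p.2 : ℝ) - ((1:ℕ):ℝ))) / (2 * (r : ℝ) - 2 + (k : ℝ))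
        = Real.pi * ((2 * (r : ℝ) - 2 + (k : ℝ)) - (2 * (r : ℝ) - ((1:ℕ):ℝ) - (p.2:ℝ))) / (2 * (r : ℝ) - 2 + (k : ℝ)) := by
      push_cast; ring
    have e2 : Real.pi * ((k:ℝ) + (2 * (r : ℝ) - ((1:ℕ):ℝ) - (p.2:ℝ))) / (2 * (r : ℝ) - 2 + (k : ℝ))
        = Real.pi * ((2 * (r : ℝ) - 2 + (k : ℝ)) - ((p.2:ℝ) - ((1:ℕ):ℝ))) / (2 * (r : ℝ) - 2 + (k : ℝ)) := by
      push_cast; ring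
    rw [e1, e2, sin_flip (ne_of_gt hN), sin_flip (ne_of_gt hN), mul_comm]
    rw [hi] at hden
    exact div_self (ne_of_gt hden)
  · rw [if_neg hi]
    simp only [zero_add]
    exact div_self (ne_of_gt hden)

lemma main_r_pos (r k : ℕ) (hr : 4 ≤ r) (m : ℕ) (hm : m ≤ k) :
    0 < qdimD r k (fun j => if j = r then (m : ℤ) else 0) := by
  rw [qdim_r r k hr m]
  apply div_pos
  · exact prod_numF_pos hr (Nat.cast_nonneg m) (by exact_mod_cast hm)
  · exact prod_numF_pos hr le_rfl (Nat.cast_nonneg k)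

lemma main_r_symm (r k : ℕ) (hr : 4 ≤ r) (m : ℕ) (hm : m ≤ k) :
    qdimD r k (fun j => if j = r then (m : ℤ) else 0)
      = qdimD r k (fun j => if j = r then ((k - m : ℕ) : ℤ) else 0) := by
  rw [qdim_r r k hr m, qdim_r r k hr (k - m)]
  have hc : ((k - m : ℕ) : ℝ) = (k : ℝ) - (m : ℝ) := by
    exact Nat.cast_sub hm
  rw [hc, prod_numF_symm r k hr (m : ℝ)]

lemma main_r_bound (r k : ℕ) (hr : 4 ≤ r) :
    qdimD r k (fun j => if j = r then (k : ℤ) else 0) = 1 := by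
  rw [qdim_r r k hr k]
  have h := prod_numF_symm r k hr (k : ℝ)
  rw [sub_self] at h
  rw [h]
  exact div_self (ne_of_gt (prod_numF_pos hr le_rfl (Nat.cast_nonneg k)))

/-- For `a ∈ {1, r-1, r}`: positivity of `D(mω_a)` for `0 ≤ m ≤ k`, the symmetry
`D(mω_a) = D((k-m)ω_a)` for `0 < m < k`, and the unit boundary condition `D(kω_a) = 1`. -/
theorem stmt1 (r k : ℕ) (hr : 4 ≤ r) (hk : 1 ≤ k) (a : ℕ)
    (ha : a = 1 ∨ a = r - 1 ∨ a = r) :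
    (∀ m : ℕ, m ≤ k → 0 < qdimD r k (fun j => if j = a then (m : ℤ) else 0)) ∧
    (∀ m : ℕ, 0 < m → m < k →
      qdimD r k (fun j => if j = a then (m : ℤ) else 0)
        = qdimD r k (fun j => if j = a then ((k - m : ℕ) : ℤ) else 0)) ∧
    qdimD r k (fun j => if j = a then (k : ℤ) else 0) = 1 := by
  rcases ha with h | h | h
  · subst h
    refine ⟨?_, ?_, ?_⟩
    · intro m hm
      rw [qdim_one r k hr m]
      exact Finset.prod_pos
        (fun p hp => termOne_pos hr hp (Nat.cast_nonneg m) (by exact_mod_cast hm))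
    · intro m hm0 hmk
      rw [qdim_one r k hr m, qdim_one r k hr (k - m)]
      apply Finset.prod_congr rfl
      intro p hp
      have hc : ((k - m : ℕ) : ℝ) = (k : ℝ) - (m : ℝ) := by
        exact Nat.cast_sub hmk.le
      rw [hc]
      exact termOne_symm hr hk hp (m : ℝ)
    · rw [qdim_one r k hr k]
      exact Finset.prod_eq_one (fun p hp => termOne_boundary hr hk hp)
  · subst h
    refine ⟨?_, ?_, ?_⟩
    · intro m hm
      rw [qdim_rm1 r k hr m]
      exact main_r_pos r k hr m hm
    · intro m hm0 hmk
      rw [qdim_rm1 r k hr m, qdim_rm1 r k hr (k - m)]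
      exact main_r_symm r k hr m hmk.le
    · rw [qdim_rm1 r k hr k]
      exact main_r_bound r k hr
  · rw [h]
    exact ⟨fun m hm => main_r_pos r k hr m hm,
      fun m hm0 hmk => main_r_symm r k hr m hmk.le,
      main_r_bound r k hr⟩
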